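/- Let m be a multiplicity pattern of degree d and A_m the closure of the locus of monic degree-d polynomials with root multiplicity pattern m. Then the complement A_m \ A_m° is the union of the sets A_{m'} over all strict degenerations m' of m. -/

import Mathlib

open Polynomial

/-- `a ∈ ℂ^d` (the coefficient vector of the monic polynomial
`X^d + Σᵢ aᵢ X^{d-(i+1)}`) realizes the multiplicity pattern `m = (m₁,…,m_l)` if the
polynomial equals `∏ᵢ (X − zᵢ)^{mᵢ}` for some pairwise distinct roots `z₁,…,z_l`. -/
def realizesPattern {d l : ℕ} (m : Fin l → ℕ) (a : Fin d → ℂ) : Prop :=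
  ∃ z : Fin l → ℂ, Function.Injective z ∧
    (∏ i, (X - C (z i)) ^ (m i)) =
      X ^ d + ∑ i : Fin d, C (a i) * X ^ (d - ((i : ℕ) + 1))

/-- The locus `A_m°` of monic degree-`d` polynomials (identified with their
coefficient vectors in `ℂ^d`) with root-multiplicity pattern exactly `m`. -/
def Acirc (d l : ℕ) (m : Fin l → ℕ) : Set (Fin d → ℂ) := {a | realizesPattern m a}

/-- The Zariski closure `A_m` of `A_m°`. -/
def Abar (d l : ℕ) (m : Fin l → ℕ) : Set (Fin d → ℂ) :=
  MvPolynomial.zeroLocus ℂ (MvPolynomial.vanishingIdeal ℂ (Acirc d l m))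

/-!
Write `Φ_m : ℂ^l → ℂ^d` for the map sending `z` to the coefficients of `∏ₖ (X - zₖ)^{mₖ}`.
Its comorphism makes `ℂ[z]` integral over `ℂ[a]`, since every `zₖ` is a root of the
universal monic polynomial of degree `d`; by going up and the Nullstellensatz the image of
`Φ_m` is therefore Zariski closed. As `A_m°` is the image of the Zariski-dense set of
injective `z`, this gives `A_m = Φ_m(ℂ^l)`. A point `Φ_m(z)` lies outside `A_m°` exactly
when `z` has repeated entries, and grouping equal entries writes it as `Φ_{m'}(w)` for a
strict degeneration `m'`. Conversely, `Φ_{m'}(w)` has at most `l' < l` distinct roots.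
-/

namespace Polynomial

section MonicOfCoeffs

variable {R S : Type*} [Semiring R] [Semiring S]

noncomputable def monicOfCoeffs (d : ℕ) (a : Fin d → R) : R[X] :=
  X ^ d + ∑ i : Fin d, C (a i) * X ^ (d - ((i : ℕ) + 1))

def coeffVec (d : ℕ) (p : R[X]) : Fin d → R :=
  fun i => p.coeff (d - ((i : ℕ) + 1))

theorem coeff_sum_C_mul_X_pow_sub {d : ℕ} (a : Fin d → R) (n : ℕ) :
    (∑ i : Fin d, C (a i) * X ^ (d - ((i : ℕ) + 1))).coeff n =
      if h : n < d then a ⟨d - 1 - n, by omega⟩ else 0 := by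
  simp only [finsetSum_coeff, coeff_C_mul_X_pow]
  split_ifs with h
  · rw [Fintype.sum_eq_single ⟨d - 1 - n, by omega⟩, if_pos (by simp; omega)]
    intro i hi
    exact if_neg fun hn => hi (Fin.ext (by simp; omega))
  · exact Finset.sum_eq_zero fun i _ => if_neg (by omega)

theorem coeffVec_monicOfCoeffs {d : ℕ} (a : Fin d → R) :
    coeffVec d (monicOfCoeffs d a) = a := by
  funext i
  rw [coeffVec, monicOfCoeffs, coeff_add, coeff_X_pow, coeff_sum_C_mul_X_pow_sub,
    if_neg (by omega), dif_pos (by omega), zero_add]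
  congr 1
  ext
  simp only
  omega

theorem monicOfCoeffs_coeffVec {d : ℕ} {p : R[X]} (hp : p.Monic) (hd : p.natDegree = d) :
    monicOfCoeffs d (coeffVec d p) = p := by
  ext n
  rw [monicOfCoeffs, coeff_add, coeff_X_pow, coeff_sum_C_mul_X_pow_sub]
  rcases lt_trichotomy n d with h | rfl | h
  · rw [if_neg h.ne, dif_pos h, zero_add, coeffVec]
    congr 1
    simp only
    omega
  · rw [if_pos rfl, dif_neg (lt_irrefl _), add_zero, ← hd, hp.coeff_natDegree]
  · rw [if_neg h.ne', dif_neg (by omega), add_zero, coeff_eq_zero_of_natDegree_lt (by omega)]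

theorem eq_of_coeffVec_eq {d : ℕ} {p q : R[X]} (hp : p.Monic) (hq : q.Monic)
    (hpd : p.natDegree = d) (hqd : q.natDegree = d) (h : coeffVec d p = coeffVec d q) : p = q := by
  rw [← monicOfCoeffs_coeffVec hp hpd, ← monicOfCoeffs_coeffVec hq hqd, h]

theorem monic_monicOfCoeffs [Nontrivial R] {d : ℕ} (a : Fin d → R) :
    (monicOfCoeffs d a).Monic :=
  monic_X_pow_add <| (degree_lt_iff_coeff_zero _ _).mpr fun n hn => by
    rw [coeff_sum_C_mul_X_pow_sub, dif_neg (by omega)]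

theorem map_monicOfCoeffs {d : ℕ} (f : R →+* S) (a : Fin d → R) :
    (monicOfCoeffs d a).map f = monicOfCoeffs d (f ∘ a) := by
  simp [monicOfCoeffs, Polynomial.map_sum]

theorem coeffVec_map {d : ℕ} (f : R →+* S) (p : R[X]) :
    coeffVec d (p.map f) = f ∘ coeffVec d p := by
  funext i
  simp [coeffVec]

end MonicOfCoeffs

variable {R S : Type*} [CommRing R] [CommRing S]

noncomputable def patternPoly {l : ℕ} (m : Fin l → ℕ) (z : Fin l → R) : R[X] :=
  ∏ k, (X - C (z k)) ^ (m k)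

section
variable {l : ℕ} (m : Fin l → ℕ)

theorem monic_patternPoly [Nontrivial R] (z : Fin l → R) : (patternPoly m z).Monic :=
  monic_prod_of_monic _ _ fun k _ => (monic_X_sub_C (z k)).pow (m k)

theorem natDegree_patternPoly [Nontrivial R] (z : Fin l → R) :
    (patternPoly m z).natDegree = ∑ k, m k := by
  rw [patternPoly, natDegree_prod_of_monic _ _ fun k _ => (monic_X_sub_C (z k)).pow (m k)]
  simp [(monic_X_sub_C _).natDegree_pow]

theorem patternPoly_map (f : R →+* S) (z : Fin l → R) :
    (patternPoly m z).map f = patternPoly m (f ∘ z) := by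
  simp [patternPoly, Polynomial.map_prod]

theorem isRoot_patternPoly (z : Fin l → R) {k : Fin l} (hk : m k ≠ 0) :
    (patternPoly m z).IsRoot (z k) := by
  rw [IsRoot, patternPoly, eval_prod]
  exact Finset.prod_eq_zero (Finset.mem_univ k) (by simp [hk])

theorem mem_range_of_isRoot_patternPoly [IsDomain R] {z : Fin l → R} {x : R}
    (hx : (patternPoly m z).IsRoot x) : x ∈ Set.range z := by
  rw [IsRoot, patternPoly, eval_prod, Finset.prod_eq_zero_iff] at hx
  obtain ⟨k, -, hk⟩ := hx
  simp only [eval_pow, eval_sub, eval_X, eval_C, pow_eq_zero_iff', sub_eq_zero] at hk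
  exact ⟨k, hk.1.symm⟩

theorem patternPoly_comp {l' : ℕ} {m' : Fin l' → ℕ} {φ : Fin l → Fin l'}
    (hm' : ∀ i, m' i = ∑ j ∈ Finset.univ.filter (fun j => φ j = i), m j) (w : Fin l' → R) :
    patternPoly m (w ∘ φ) = patternPoly m' w := by
  rw [patternPoly, ← Finset.prod_fiberwise Finset.univ φ]
  refine Finset.prod_congr rfl fun i _ => ?_
  rw [hm', ← Finset.prod_pow_eq_pow_sum]
  refine Finset.prod_congr rfl fun j hj => ?_
  rw [Function.comp_apply, (Finset.mem_filter.mp hj).2]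

theorem le_of_patternPoly_eq [IsDomain R] {l' : ℕ} {m' : Fin l' → ℕ} {z : Fin l → R}
    {w : Fin l' → R} (hm : ∀ k, m k ≠ 0) (hz : Function.Injective z)
    (h : patternPoly m z = patternPoly m' w) : l ≤ l' := by
  have hroot : ∀ k, ∃ i, w i = z k := fun k =>
    mem_range_of_isRoot_patternPoly m' (h ▸ isRoot_patternPoly m z (hm k))
  choose g hg using hroot
  exact Fin.le_of_injective g fun k k' hkk' => hz (by rw [← hg, ← hg k', hkk'])

end

end Polynomial

namespace MvPolynomial

theorem eq_zero_of_eval_injective_eq_zero {R τ : Type*} [CommRing R] [IsDomain R] [Infinite R]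
    [Finite τ] {f : MvPolynomial τ R}
    (hf : ∀ z : τ → R, Function.Injective z → eval z f = 0) : f = 0 := by
  have := Fintype.ofFinite τ
  classical
  set D : MvPolynomial τ R := ∏ p ∈ Finset.univ.offDiag, (X p.1 - X p.2)
  have hD : D ≠ 0 := Finset.prod_ne_zero_iff.mpr fun p hp =>
    sub_ne_zero.mpr fun h => (Finset.mem_offDiag.mp hp).2.2 (X_injective h)
  -- `D` vanishes exactly at the non-injective points
  have hfD : f * D = 0 := funext fun z => by
    by_cases hz : Function.Injective z
    · simp [hf z hz]
    · obtain ⟨i, j, hij, hne⟩ := Function.not_injective_iff.mp hz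
      have : eval z D = 0 := by
        rw [map_prod]
        exact Finset.prod_eq_zero (i := (i, j)) (by simp [hne]) (by simp [hij])
      simp [this]
  exact (mul_eq_zero.mp hfD).resolve_right hD

variable {k : Type*} [Field k] {σ τ : Type*}

theorem aeval_eval_comp (c : σ → MvPolynomial τ k) (z : τ → k) (f : MvPolynomial σ k) :
    aeval (fun i => eval z (c i)) f = eval z (aeval c f) :=
  (aeval_bind₁ z c f).symm

theorem vanishingIdeal_image_eq_ker {S : Set (τ → k)}
    (hS : ∀ f : MvPolynomial τ k, (∀ z ∈ S, eval z f = 0) → f = 0)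
    (c : σ → MvPolynomial τ k) :
    vanishingIdeal k ((fun z i => eval z (c i)) '' S) = RingHom.ker (aeval c) := by
  ext f
  simp only [mem_vanishingIdeal_iff, Set.forall_mem_image, aeval_eval_comp, RingHom.mem_ker]
  exact ⟨hS _, fun h z _ => by rw [h, map_zero]⟩

theorem zeroLocus_ker_aeval_eq_range [IsAlgClosed k] [Finite τ] (c : σ → MvPolynomial τ k)
    (hc : (aeval (R := k) c : MvPolynomial σ k →+* MvPolynomial τ k).IsIntegral) :
    zeroLocus k (RingHom.ker (aeval (R := k) c)) = Set.range fun z i => eval z (c i) := by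
  refine subset_antisymm (fun a ha => ?_) ?_
  · let _ := (aeval (R := k) c : MvPolynomial σ k →+* MvPolynomial τ k).toAlgebra
    have : Algebra.IsIntegral (MvPolynomial σ k) (MvPolynomial τ k) := ⟨hc⟩
    -- going up: the point `a` lifts to a maximal ideal, i.e. a point `z`, upstairs
    obtain ⟨Q, hQmax, hQ⟩ := Ideal.exists_ideal_over_maximal_of_isIntegral
      (vanishingIdeal k {a}) fun f hf => (mem_vanishingIdeal_singleton_iff a f).mpr (ha f hf)
    obtain ⟨z, rfl⟩ := (isMaximal_iff_eq_vanishingIdeal_singleton (I := Q)).mp hQmax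
    refine ⟨z, ?_⟩
    funext i
    have hi : X i - C (a i) ∈ vanishingIdeal k {a} := by simp
    rw [← hQ] at hi
    simpa [sub_eq_zero, RingHom.algebraMap_toAlgebra] using hi
  · rintro _ ⟨z, rfl⟩ f hf
    rw [aeval_eval_comp, RingHom.mem_ker.mp hf, map_zero]

end MvPolynomial

theorem Function.exists_surjective_fin_injective_comp {ι α : Type*} [Fintype ι] (z : ι → α) :
    ∃ (n : ℕ) (φ : ι → Fin n) (w : Fin n → α),
      Function.Surjective φ ∧ Function.Injective w ∧ w ∘ φ = z := by
  classical
  let e := Fintype.equivFin (Set.range z)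
  exact ⟨_, e ∘ Set.rangeFactorization z, Subtype.val ∘ e.symm,
    e.surjective.comp Set.rangeFactorization_surjective,
    Subtype.val_injective.comp e.symm.injective, funext fun j => by simp [Set.rangeFactorization]⟩

section Degeneration

variable {l l' : ℕ} {m : Fin l → ℕ} {m' : Fin l' → ℕ} {φ : Fin l → Fin l'}

theorem sum_eq_of_fiberwise
    (hm' : ∀ i, m' i = ∑ j ∈ Finset.univ.filter (fun j => φ j = i), m j) :
    ∑ i, m' i = ∑ j, m j := by
  rw [← Finset.sum_fiberwise Finset.univ φ m]
  exact Finset.sum_congr rfl fun i _ => hm' i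

theorem pos_of_fiberwise (hm : ∀ j, 0 < m j) (hφ : Function.Surjective φ)
    (hm' : ∀ i, m' i = ∑ j ∈ Finset.univ.filter (fun j => φ j = i), m j) (i : Fin l') :
    0 < m' i := by
  obtain ⟨j, hj⟩ := hφ i
  rw [hm']
  exact Finset.sum_pos (fun j _ => hm j) ⟨j, by simp [hj]⟩

end Degeneration

section PatternMap

variable {R : Type*} [CommRing R] {d l : ℕ} (m : Fin l → ℕ)

noncomputable def patternMap (d : ℕ) (z : Fin l → R) : Fin d → R :=
  coeffVec d (patternPoly m z)

noncomputable def patternCoeffs (d : ℕ) : Fin d → MvPolynomial (Fin l) R :=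
  patternMap m d MvPolynomial.X

theorem eval_patternCoeffs (z : Fin l → R) :
    (fun i => MvPolynomial.eval z (patternCoeffs m d i)) = patternMap m d z := by
  have h := coeffVec_map (d := d) (MvPolynomial.eval z) (patternPoly m MvPolynomial.X)
  rw [patternPoly_map, show MvPolynomial.eval z ∘ MvPolynomial.X = z from
    funext fun i => MvPolynomial.eval_X i] at h
  exact h.symm

theorem patternMap_comp {l' : ℕ} {m' : Fin l' → ℕ} {φ : Fin l → Fin l'}
    (hm' : ∀ i, m' i = ∑ j ∈ Finset.univ.filter (fun j => φ j = i), m j) (w : Fin l' → R) :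
    patternMap m d (w ∘ φ) = patternMap m' d w := by
  rw [patternMap, patternPoly_comp m hm', patternMap]

theorem isIntegral_aeval_patternCoeffs [Nontrivial R] (hm : ∀ k, m k ≠ 0)
    (hsum : ∑ k, m k = d) :
    (MvPolynomial.aeval (R := R) (patternCoeffs (R := R) m d) :
      MvPolynomial (Fin d) R →+* MvPolynomial (Fin l) R).IsIntegral := by
  set f : MvPolynomial (Fin d) R →+* MvPolynomial (Fin l) R :=
    (MvPolynomial.aeval (R := R) (patternCoeffs (R := R) m d)).toRingHom
  -- `X k` is a root of `monicOfCoeffs d X` pushed upstairs, which is `∏ (T - X j) ^ m j`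
  have hX : ∀ k, f.IsIntegralElem (MvPolynomial.X k) := fun k => by
    refine ⟨monicOfCoeffs d MvPolynomial.X, monic_monicOfCoeffs _, ?_⟩
    have hf : f ∘ MvPolynomial.X = patternCoeffs m d := funext fun i => MvPolynomial.aeval_X _ i
    rw [Polynomial.eval₂_eq_eval_map, map_monicOfCoeffs, hf, patternCoeffs, patternMap,
      monicOfCoeffs_coeffVec (monic_patternPoly m _)
        (by rw [natDegree_patternPoly, hsum])]
    exact isRoot_patternPoly m _ (hm k)
  intro p
  induction p using MvPolynomial.induction_on with
  | C r => simpa [f] using f.isIntegralElem_map (x := MvPolynomial.C r)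
  | add p q hp hq => exact RingHom.IsIntegralElem.add f hp hq
  | mul_X p k hp => exact RingHom.IsIntegralElem.mul f hp (hX k)

end PatternMap

section Pattern

variable {d l : ℕ} (m : Fin l → ℕ)

theorem acirc_eq_image_injective (hsum : ∑ k, m k = d) :
    Acirc d l m = patternMap m d '' {z | Function.Injective z} := by
  ext a
  refine exists_congr fun z => and_congr_right fun _ => ?_
  change patternPoly m z = monicOfCoeffs d a ↔ coeffVec d (patternPoly m z) = a
  constructor
  · intro h
    rw [h, coeffVec_monicOfCoeffs]
  · rintro rfl
    exact (monicOfCoeffs_coeffVec (monic_patternPoly m z)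
      (by rw [natDegree_patternPoly, hsum])).symm

theorem abar_eq_range_patternMap (hm : ∀ k, 0 < m k) (hsum : ∑ k, m k = d) :
    Abar d l m = Set.range (patternMap m d) := by
  have hc : (fun z i => MvPolynomial.eval z (patternCoeffs m d i)) = patternMap (R := ℂ) m d :=
    funext (eval_patternCoeffs m)
  rw [Abar, acirc_eq_image_injective m hsum, ← hc,
    MvPolynomial.vanishingIdeal_image_eq_ker (S := {z | Function.Injective z})
      (fun _ hf => MvPolynomial.eq_zero_of_eval_injective_eq_zero hf),
    MvPolynomial.zeroLocus_ker_aeval_eq_range _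
      (isIntegral_aeval_patternCoeffs m (fun k => (hm k).ne') hsum)]

end Pattern

theorem pattern_closure_boundary_general (d l : ℕ) (m : Fin l → ℕ)
    (hpos : ∀ i, 0 < m i) (hsum : ∑ i, m i = d) :
    Abar d l m \ Acirc d l m =
      ⋃ (l' : ℕ) (m' : Fin l' → ℕ) (φ : Fin l → Fin l') (_ : Function.Surjective φ)
        (_ : ∀ i, m' i = ∑ j ∈ Finset.univ.filter (fun j => φ j = i), m j)
        (_ : l' < l),
        Abar d l' m' := by
  ext a
  simp only [Set.mem_sdiff, Set.mem_iUnion, abar_eq_range_patternMap m hpos hsum,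
    acirc_eq_image_injective m hsum]
  constructor
  · rintro ⟨⟨z, rfl⟩, hz⟩
    obtain ⟨l', φ, w, hφ, hw, rfl⟩ := Function.exists_surjective_fin_injective_comp z
    have hφinj : ¬ Function.Injective φ := fun h => hz ⟨w ∘ φ, hw.comp h, rfl⟩
    let m' : Fin l' → ℕ := fun i => ∑ j ∈ Finset.univ.filter (fun j => φ j = i), m j
    have hm' : ∀ i, m' i = ∑ j ∈ Finset.univ.filter (fun j => φ j = i), m j := fun _ => rfl
    have hl : l' < l := by simpa using Fintype.card_lt_of_surjective_not_injective φ hφ hφinj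
    have hsum' : ∑ i, m' i = d := by rw [sum_eq_of_fiberwise hm', hsum]
    refine ⟨l', m', φ, hφ, hm', hl, ?_⟩
    rw [abar_eq_range_patternMap m' (pos_of_fiberwise hpos hφ hm') hsum']
    exact ⟨w, (patternMap_comp m hm' w).symm⟩
  · rintro ⟨l', m', φ, hφ, hm', hl, ha⟩
    have hsum' : ∑ i, m' i = d := by rw [sum_eq_of_fiberwise hm', hsum]
    rw [abar_eq_range_patternMap m' (pos_of_fiberwise hpos hφ hm') hsum'] at ha
    obtain ⟨w, rfl⟩ := ha
    refine ⟨⟨w ∘ φ, patternMap_comp m hm' w⟩, ?_⟩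
    rintro ⟨z, hz, hzw⟩
    have hpoly : patternPoly m z = patternPoly m' w :=
      eq_of_coeffVec_eq (monic_patternPoly m z) (monic_patternPoly m' w)
        (by rw [natDegree_patternPoly, hsum]) (by rw [natDegree_patternPoly, hsum']) hzw
    exact hl.not_ge (le_of_patternPoly_eq m (fun k => (hpos k).ne') hz hpoly)

/-- For a multiplicity pattern `m` of degree `d`, the complement `A_m \ A_m°` is the
union of the `A_{m'}` over all strict degenerations `m'` of `m` (patterns obtained by
summing the parts of `m` along a surjection onto a strictly shorter index set). -/
theorem pattern_closure_boundary (d l : ℕ) (m : Fin l → ℕ)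
    (hpos : ∀ i, 0 < m i) (hmono : Antitone m) (hsum : ∑ i, m i = d) :
    Abar d l m \ Acirc d l m =
      ⋃ (l' : ℕ) (m' : Fin l' → ℕ) (φ : Fin l → Fin l') (_ : Function.Surjective φ)
        (_ : ∀ i, m' i = ∑ j ∈ Finset.univ.filter (fun j => φ j = i), m j)
        (_ : l' < l),
        Abar d l' m' :=
  pattern_closure_boundary_general d l m hpos hsum
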